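/- arXiv:2201.09350 — 3 statements merged into one kernel-verified Lean document; each statement's English description precedes it below -/
import Mathlib

section
/- (Hommel inequality) If all K hypotheses are null, then for arbitrarily dependent p-variables, P(S_K(P) ≤ α) ≤ ℓ_K·α for all α ∈ [0,1], where S_K(p) = min_k (K/k)·p_(k) and ℓ_K = Σ_{k=1}^K 1/k. -/
open MeasureTheory ProbabilityTheory Finset
open scoped ENNReal Classical

noncomputable section

/-- The `i`-th smallest value (0-indexed) among `p 0, …, p (K-1)`. -/
def sortAsc {K : ℕ} (p : Fin K → ℝ) : Fin K → ℝ := p ∘ Tuple.sort p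

/-- The `i`-th largest value (0-indexed) among `e 0, …, e (K-1)`. -/
def sortDesc {K : ℕ} (e : Fin K → ℝ) : Fin K → ℝ := e ∘ Tuple.sort (fun j => -e j)

/-- `k* = max {k : K p_(k) / k ≤ α}` (with `max ∅ = 0`), the BH rejection count. -/
def bhCount (K : ℕ) (α : ℝ) (p : Fin K → ℝ) : ℕ :=
  (univ.filter (fun i : Fin K => (K : ℝ) * sortAsc p i / (i.1 + 1) ≤ α)).sup
    (fun i => i.1 + 1)

/-- The BH procedure rejects the hypotheses carrying the `k*` smallest p-values. -/
def bhRejects (K : ℕ) (α : ℝ) (p : Fin K → ℝ) : Finset (Fin K) :=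
  univ.filter (fun k => ∃ i : Fin K, i.1 + 1 ≤ bhCount K α p ∧ p k ≤ sortAsc p i)

/-- `k* = max {k : k e_[k] / K ≥ 1/α}`, the e-BH rejection count. -/
def ebhCount (K : ℕ) (α : ℝ) (e : Fin K → ℝ) : ℕ :=
  (univ.filter (fun i : Fin K => 1 / α ≤ (i.1 + 1) * sortDesc e i / K)).sup
    (fun i => i.1 + 1)

/-- The e-BH procedure rejects the hypotheses carrying the `k*` largest e-values. -/
def ebhRejects (K : ℕ) (α : ℝ) (e : Fin K → ℝ) : Finset (Fin K) :=
  univ.filter (fun k => ∃ i : Fin K, i.1 + 1 ≤ ebhCount K α e ∧ sortDesc e i ≤ e k)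

/-- Simes function `S_K(p) = min_k (K/k) p_(k)`. -/
def simes (K : ℕ) (p : Fin K → ℝ) : ℝ := ⨅ i : Fin K, (K : ℝ) / (i.1 + 1) * sortAsc p i

/-- Harmonic number `ℓ_K = ∑_{k=1}^K 1/k`. -/
def harm (K : ℕ) : ℝ := ∑ k ∈ Finset.Icc 1 K, (1 : ℝ) / k

/-- An increasing (upper) subset of `ℝ^K`. -/
def IncreasingSet {K : ℕ} (A : Set (Fin K → ℝ)) : Prop := ∀ x ∈ A, ∀ y, x ≤ y → y ∈ A

/-- Positive regression dependence on the subset `N` of nulls. -/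
def PRDS {Ω : Type*} [MeasurableSpace Ω] (μ : Measure Ω) {K : ℕ}
    (P : Fin K → Ω → ℝ) (N : Finset (Fin K)) : Prop :=
  ∀ k ∈ N, ∀ A : Set (Fin K → ℝ), MeasurableSet A → IncreasingSet A →
    Monotone (fun x : ℝ => μ[|{ω | P k ω ≤ x}] {ω | (fun j => P j ω) ∈ A})

/-- False discovery proportion of a rejection set `D` w.r.t. the null set `N`. -/
def fdp {K : ℕ} (D N : Finset (Fin K)) : ℝ := ((D ∩ N).card : ℝ) / (max D.card 1 : ℕ)

end

/-! If `S_K(p) ≤ α`, some order statistic satisfies `p_(m) ≤ mα/K`, so at least `m` of the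
`p_i` lie below `kα/K` for every `k ≥ m`. With weights `w_k ≥ 0` whose tail sums
`∑_{k=m}^K w_k` equal `1/m`, the function `∑_i ∑_k w_k 1{p_i ≤ kα/K}` is therefore at least
`m · 1/m = 1` on that event. Markov's inequality and `P(P_i ≤ kα/K) ≤ kα/K` bound the
probability by `K ∑_k w_k kα/K = α ∑_k k w_k`, and exchanging the order of summation gives
`∑_k k w_k = ∑_j ∑_{k ≥ j} w_k = ∑_j 1/j = ℓ_K`. -/

theorem measureReal_le_sum_of_one_le_sum_indicator {Ω ι : Type*} [MeasurableSpace Ω]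
    (μ : Measure Ω) [IsFiniteMeasure μ] (s : Finset ι) {c : ι → ℝ}
    (hc : ∀ j ∈ s, 0 ≤ c j) {A : ι → Set Ω} (hA : ∀ j, MeasurableSet (A j)) {S : Set Ω}
    (hS : ∀ ω ∈ S, 1 ≤ ∑ j ∈ s, (A j).indicator (fun _ => c j) ω) :
    μ.real S ≤ ∑ j ∈ s, μ.real (A j) * c j := by
  set F : Ω → ℝ := fun ω => ∑ j ∈ s, (A j).indicator (fun _ => c j) ω
  have hF_nonneg : 0 ≤ F := fun ω =>
    Finset.sum_nonneg fun j hj => Set.indicator_nonneg (fun _ _ => hc j hj) ω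
  have hF_int : Integrable F μ :=
    integrable_finsetSum s fun j _ => (integrable_const (c j)).indicator (hA j)
  calc μ.real S ≤ μ.real {ω | 1 ≤ F ω} := measureReal_mono hS
    _ ≤ ∫ ω, F ω ∂μ := by
      simpa using mul_meas_ge_le_integral_of_nonneg (Filter.Eventually.of_forall hF_nonneg)
        hF_int 1
    _ = ∑ j ∈ s, μ.real (A j) * c j := by
      rw [integral_finsetSum s fun j _ => (integrable_const (c j)).indicator (hA j)]
      simp only [integral_indicator_const _ (hA _), smul_eq_mul]

theorem measureReal_le_of_pvalue {Ω : Type*} [MeasurableSpace Ω] {μ : Measure Ω}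
    [IsProbabilityMeasure μ] {X : Ω → ℝ}
    (hX : ∀ x ∈ Set.Ioo (0 : ℝ) 1, μ {ω | X ω ≤ x} ≤ ENNReal.ofReal x) {x : ℝ} (hx : 0 ≤ x) :
    μ.real {ω | X ω ≤ x} ≤ x := by
  rcases le_or_gt 1 x with hx1 | hx1
  · exact measureReal_le_one.trans hx1
  refine le_of_forall_pos_le_add fun ε hε => ?_
  set y := min (x + ε) ((x + 1) / 2)
  have hy : y ∈ Set.Ioo (0 : ℝ) 1 := ⟨by positivity, by simp only [y]; grind⟩
  calc μ.real {ω | X ω ≤ x} ≤ μ.real {ω | X ω ≤ y} :=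
        measureReal_mono fun ω (h : X ω ≤ x) => h.trans (by simp only [y]; grind)
    _ ≤ y := ENNReal.toReal_le_of_le_ofReal hy.1.le (hX y hy)
    _ ≤ x + ε := min_le_left _ _

theorem le_card_filter_le_sortAsc {K : ℕ} (p : Fin K → ℝ) (i : Fin K) :
    i.1 + 1 ≤ #{j | p j ≤ sortAsc p i} := by
  have hsub : (Iic i).image (Tuple.sort p) ⊆ ({j | p j ≤ sortAsc p i} : Finset (Fin K)) := by
    simp only [subset_iff, mem_image, mem_Iic, mem_filter, mem_univ, true_and]
    rintro _ ⟨a, ha, rfl⟩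
    exact Tuple.monotone_sort p ha
  calc i.1 + 1 = #((Iic i).image (Tuple.sort p)) := by
        rw [card_image_of_injective _ (Equiv.injective _), Fin.card_Iic]
    _ ≤ _ := card_le_card hsub

theorem exists_sortAsc_le_of_simes_le {K : ℕ} (hK : 0 < K) {p : Fin K → ℝ} {α : ℝ}
    (h : simes K p ≤ α) : ∃ i : Fin K, sortAsc p i ≤ (i.1 + 1) * α / K := by
  have : Nonempty (Fin K) := Fin.pos_iff_nonempty.mp hK
  obtain ⟨i, hi⟩ :=
    exists_eq_ciInf_of_finite (f := fun i : Fin K => (K : ℝ) / (i.1 + 1) * sortAsc p i)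
  refine ⟨i, ?_⟩
  rw [simes, ← hi, div_mul_eq_mul_div, div_le_iff₀ (by positivity)] at h
  rw [le_div_iff₀ (by positivity)]
  linarith

noncomputable def truncInv (K k : ℕ) : ℝ := if k ≤ K then (k : ℝ)⁻¹ else 0

noncomputable def hommelWeight (K k : ℕ) : ℝ := truncInv K k - truncInv K (k + 1)

theorem hommelWeight_nonneg (K : ℕ) {k : ℕ} (hk : 0 < k) : 0 ≤ hommelWeight K k := by
  unfold hommelWeight truncInv
  split_ifs
  · exact sub_nonneg.2 (inv_anti₀ (by positivity) (by simp))
  · simp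
  · omega
  · simp

theorem sum_Icc_hommelWeight {K m : ℕ} (hmK : m ≤ K) :
    ∑ k ∈ Icc m K, hommelWeight K k = (m : ℝ)⁻¹ := by
  have htele := Finset.sum_Icc_sub hmK (truncInv K)
  have hfirst : truncInv K m = (m : ℝ)⁻¹ := if_pos hmK
  have hlast : truncInv K (K + 1) = 0 := if_neg (by omega)
  rw [sum_sub_distrib, hfirst, hlast] at htele
  simp only [hommelWeight, sum_sub_distrib]
  linarith

theorem sum_Icc_natCast_mul_hommelWeight (K : ℕ) :
    ∑ k ∈ Icc 1 K, (k : ℝ) * hommelWeight K k = harm K := by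
  calc ∑ k ∈ Icc 1 K, (k : ℝ) * hommelWeight K k
      = ∑ k ∈ Icc 1 K, ∑ _j ∈ Icc 1 k, hommelWeight K k := by simp
    _ = ∑ j ∈ Icc 1 K, ∑ k ∈ Icc j K, hommelWeight K k :=
      Finset.sum_comm' fun k j => by simp only [mem_Icc]; omega
    _ = harm K := by
      rw [harm]
      refine sum_congr rfl fun j hj => ?_
      rw [mem_Icc] at hj
      rw [sum_Icc_hommelWeight hj.2, one_div]

theorem one_le_sum_hommelWeight_of_simes_le {K : ℕ} (hK : 0 < K) {p : Fin K → ℝ} {α : ℝ}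
    (hα : 0 ≤ α) (h : simes K p ≤ α) :
    1 ≤ ∑ i, ∑ k ∈ Icc 1 K, if p i ≤ k * α / K then hommelWeight K k else 0 := by
  obtain ⟨i₀, hi₀⟩ := exists_sortAsc_le_of_simes_le hK h
  set m := i₀.1 + 1
  set T : Finset (Fin K) := {j | p j ≤ sortAsc p i₀}
  have hterm_nonneg : ∀ i, ∀ k ∈ Icc 1 K,
      0 ≤ if p i ≤ k * α / K then hommelWeight K k else 0 := fun i k hk => by
    split_ifs
    exacts [hommelWeight_nonneg K (mem_Icc.1 hk).1, le_rfl]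
  have hrow : ∀ i ∈ T, (m : ℝ)⁻¹ ≤
      ∑ k ∈ Icc 1 K, if p i ≤ k * α / K then hommelWeight K k else 0 := fun i hi => by
    have hpi : p i ≤ m * α / K := by
      simp only [T, mem_filter, mem_univ, true_and] at hi
      exact hi.trans (by simpa [m] using hi₀)
    calc (m : ℝ)⁻¹ = ∑ k ∈ Icc m K, hommelWeight K k := (sum_Icc_hommelWeight i₀.2).symm
      _ = ∑ k ∈ Icc m K, if p i ≤ k * α / K then hommelWeight K k else 0 := by
        refine sum_congr rfl fun k hk => (if_pos (hpi.trans ?_)).symm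
        gcongr
        exact_mod_cast (mem_Icc.1 hk).1
      _ ≤ _ := sum_le_sum_of_subset_of_nonneg (Icc_subset_Icc_left (by omega))
        fun k hk _ => hterm_nonneg i k hk
  calc (1 : ℝ) = m * (m : ℝ)⁻¹ := (mul_inv_cancel₀ (by positivity)).symm
    _ ≤ #T * (m : ℝ)⁻¹ := by gcongr; exact_mod_cast le_card_filter_le_sortAsc p i₀
    _ = ∑ _i ∈ T, (m : ℝ)⁻¹ := by rw [sum_const, nsmul_eq_mul]
    _ ≤ ∑ i ∈ T, ∑ k ∈ Icc 1 K, if p i ≤ k * α / K then hommelWeight K k else 0 :=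
      sum_le_sum hrow
    _ ≤ _ := sum_le_sum_of_subset_of_nonneg (subset_univ T)
      fun i _ _ => sum_nonneg (hterm_nonneg i)

/-- **Hommel's inequality.** If all `K` hypotheses are null, then for arbitrarily
dependent p-variables, `P(S_K(P) ≤ α) ≤ ℓ_K α` for all `α ∈ [0,1]`. -/
theorem hommel_inequality
    {Ω : Type*} [MeasurableSpace Ω] (μ : Measure Ω) [IsProbabilityMeasure μ]
    {K : ℕ} (hK : 0 < K)
    (P : Fin K → Ω → ℝ) (hP : ∀ k, Measurable (P k))
    (h_pvar : ∀ k, ∀ x ∈ Set.Ioo (0 : ℝ) 1, μ {ω | P k ω ≤ x} ≤ ENNReal.ofReal x) :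
    ∀ α ∈ Set.Icc (0 : ℝ) 1,
      μ {ω | simes K (fun j => P j ω) ≤ α} ≤ ENNReal.ofReal (harm K * α) := by
  rintro α ⟨hα0, -⟩
  have hweight : ∀ j ∈ (univ : Finset (Fin K)) ×ˢ Icc 1 K, 0 ≤ hommelWeight K j.2 := fun j hj =>
    hommelWeight_nonneg K (mem_Icc.1 (mem_product.1 hj).2).1
  have hunion := measureReal_le_sum_of_one_le_sum_indicator μ (univ ×ˢ Icc 1 K) hweight
    (A := fun j => {ω | P j.1 ω ≤ j.2 * α / K})
    (fun j => measurableSet_le (hP j.1) measurable_const)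
    (S := {ω | simes K (fun j => P j ω) ≤ α}) fun ω hω => by
      simpa only [Set.indicator_apply, Set.mem_ofPred_eq, sum_product]
        using one_le_sum_hommelWeight_of_simes_le hK hα0 hω
  have hbound : μ.real {ω | simes K (fun j => P j ω) ≤ α} ≤ harm K * α := by
    calc _ ≤ ∑ j ∈ univ ×ˢ Icc 1 K, j.2 * α / K * hommelWeight K j.2 :=
          hunion.trans <| sum_le_sum fun j hj => mul_le_mul_of_nonneg_right
            (measureReal_le_of_pvalue (h_pvar j.1) (by positivity)) (hweight j hj)
      _ = K * (α / K * ∑ k ∈ Icc 1 K, (k : ℝ) * hommelWeight K k) := by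
        simp only [sum_product, sum_const, card_univ, Fintype.card_fin, nsmul_eq_mul, mul_sum]
        exact sum_congr rfl fun k _ => by ring
      _ = harm K * α := by
        rw [sum_Icc_natCast_mul_hommelWeight]
        field_simp
  exact (ENNReal.le_ofReal_iff_toReal_le (measure_ne_top _ _)
    (measureReal_nonneg.trans hbound)).2 hbound
end

section
/- For any testing procedure 𝒟 rejecting exactly the hypotheses with p-values at most α·R_𝒟/K, the FDP expectation admits the decomposition E[F_𝒟/(R_𝒟∨1)] = Σ_{k∈𝒩} ( Σ_{r=1}^K E[1{P_k ≤ αR_𝒟/K}·1{R_𝒟 ≤ r}]/(r(r+1)) + E[1{P_k ≤ αR_𝒟/K}]/(K+1) ). -/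
open MeasureTheory ProbabilityTheory Finset
open scoped ENNReal Classical

/-! Telescoping `1/(s(s+1)) = 1/s - 1/(s+1)` gives `1/(r ∨ 1) = ∑_{s=1}^K 1{r ≤ s}/(s(s+1)) + 1/(K+1)`
for every `r ≤ K` (for `r = 0` both sides equal `1`). Multiplying by the number of rejected
nulls, the FDP becomes a finite combination of products of indicators, and the decomposition
is linearity of the integral; the indicators are bounded, hence integrable for a finite measure. -/

lemma sum_Icc_one_div_mul_succ {a n : ℕ} (ha : 0 < a) (han : a ≤ n + 1) :
    ∑ r ∈ Icc a n, (1 : ℝ) / (r * (r + 1)) = 1 / a - 1 / (n + 1) := by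
  have hterm : ∀ r ∈ Ico a (n + 1),
      (1 : ℝ) / (r * (r + 1)) = -1 / ((r + 1 : ℕ) : ℝ) - -1 / (r : ℝ) := by
    intro r hr
    have hr0 : (r : ℝ) ≠ 0 := Nat.cast_ne_zero.2 (by have := (mem_Ico.1 hr).1; omega)
    push_cast
    field_simp
    ring
  rw [← Ico_add_one_right_eq_Icc, sum_congr rfl hterm, sum_Ico_sub (fun i => -1 / (i : ℝ)) han]
  push_cast
  ring

lemma one_div_max_one_eq_sum {m n : ℕ} (hm : m ≤ n + 1) :
    (1 : ℝ) / (max m 1 : ℕ) =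
      ∑ r ∈ Icc 1 n, (if m ≤ r then (1 : ℝ) else 0) / (r * (r + 1)) + 1 / (n + 1) := by
  have hfilter : (Icc 1 n).filter (m ≤ ·) = Icc (max m 1) n := by
    ext r
    simp only [mem_filter, mem_Icc]
    omega
  simp_rw [ite_div, zero_div]
  rw [← sum_filter, hfilter, sum_Icc_one_div_mul_succ (by omega) (by omega)]
  ring

lemma card_filter_div_max_one_eq_sum {ι : Type*} (s : Finset ι) (p : ι → Prop)
    [DecidablePred p] {m n : ℕ} (hm : m ≤ n + 1) :
    ((s.filter p).card : ℝ) / (max m 1 : ℕ) =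
      ∑ k ∈ s, (∑ r ∈ Icc 1 n,
          (if p k then (1 : ℝ) else 0) * (if m ≤ r then (1 : ℝ) else 0) / (r * (r + 1)) +
        (if p k then (1 : ℝ) else 0) / (n + 1)) := by
  rw [card_filter, Nat.cast_sum, sum_div]
  refine sum_congr rfl fun k _ => ?_
  rw [div_eq_mul_one_div, one_div_max_one_eq_sum hm, mul_add, mul_sum]
  push_cast
  simp only [mul_div_assoc', mul_one]

lemma integrable_ite_one_zero {Ω : Type*} [MeasurableSpace Ω] {μ : Measure Ω}
    [IsFiniteMeasure μ] {p : Ω → Prop} [DecidablePred p] (hp : MeasurableSet {ω | p ω}) :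
    Integrable (fun ω => if p ω then (1 : ℝ) else 0) μ :=
  Integrable.of_bound (Measurable.ite hp measurable_const measurable_const).aestronglyMeasurable
    1 (ae_of_all _ fun ω => by split_ifs <;> simp)

theorem fdp_decomposition_general
    {Ω : Type*} [MeasurableSpace Ω] (μ : Measure Ω) [IsProbabilityMeasure μ]
    {K : ℕ} {α : ℝ}
    (P : Fin K → Ω → ℝ) (hP : ∀ k, Measurable (P k)) (N : Finset (Fin K))
    (R : Ω → ℕ) (hR : Measurable R) (hRK : ∀ ω, R ω ≤ K) :
    ∫ ω, ((N.filter (fun k => P k ω ≤ α * R ω / K)).card : ℝ) / (max (R ω) 1 : ℕ) ∂μ =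
      ∑ k ∈ N,
        ((∑ r ∈ Finset.Icc 1 K,
            (∫ ω, (if P k ω ≤ α * R ω / K then (1 : ℝ) else 0) *
                (if R ω ≤ r then (1 : ℝ) else 0) ∂μ) / ((r : ℝ) * (r + 1))) +
          (∫ ω, (if P k ω ≤ α * R ω / K then (1 : ℝ) else 0) ∂μ) / ((K : ℝ) + 1)) := by
  have hrej : ∀ k, MeasurableSet {ω | P k ω ≤ α * R ω / K} := fun k =>
    measurableSet_le (hP k) (by fun_prop)
  have hle : ∀ r : ℕ, MeasurableSet {ω | R ω ≤ r} := fun r => hR measurableSet_Iic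
  have hint_rej := fun k => integrable_ite_one_zero (μ := μ) (hrej k)
  have hint_prod : ∀ k (r : ℕ), Integrable (fun ω => (if P k ω ≤ α * R ω / K then (1 : ℝ) else 0)
      * (if R ω ≤ r then (1 : ℝ) else 0)) μ := fun k r => by
    simpa only [ite_zero_mul_ite_zero, mul_one] using
      integrable_ite_one_zero (μ := μ)
      (p := fun ω => P k ω ≤ α * R ω / K ∧ R ω ≤ r) ((hrej k).inter (hle r))
  simp_rw [card_filter_div_max_one_eq_sum _ _ (Nat.le_succ_of_le (hRK _))]
  have hint_sum : ∀ k, Integrable (fun ω => ∑ r ∈ Icc 1 K,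
      (if P k ω ≤ α * R ω / K then (1 : ℝ) else 0) * (if R ω ≤ r then (1 : ℝ) else 0) /
        ((r : ℝ) * (r + 1))) μ := fun k =>
    integrable_finsetSum _ fun r _ => (hint_prod k r).div_const _
  refine (integral_finsetSum N fun k _ => ?_).trans (sum_congr rfl fun k _ => ?_)
  · exact (hint_sum k).add ((hint_rej k).div_const _)
  rw [integral_add (hint_sum k) ((hint_rej k).div_const _),
    integral_finsetSum _ fun r _ => (hint_prod k r).div_const _]
  simp only [integral_div]

/-- For a procedure rejecting exactly the hypotheses with p-values at most `α R_𝒟 / K`,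
the expected FDP decomposes as
`E[F/(R ∨ 1)] = ∑_{k ∈ 𝒩} (∑_{r=1}^K E[1_{P_k ≤ αR/K} 1_{R ≤ r}]/(r(r+1))
  + E[1_{P_k ≤ αR/K}]/(K+1))`. -/
theorem fdp_decomposition
    {Ω : Type*} [MeasurableSpace Ω] (μ : Measure Ω) [IsProbabilityMeasure μ]
    {K : ℕ} (hK : 0 < K) {α : ℝ} (hα : α ∈ Set.Ioo (0 : ℝ) 1)
    (P : Fin K → Ω → ℝ) (hP : ∀ k, Measurable (P k)) (N : Finset (Fin K))
    (R : Ω → ℕ) (hR : Measurable R) (hRK : ∀ ω, R ω ≤ K) :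
    ∫ ω, ((N.filter (fun k => P k ω ≤ α * R ω / K)).card : ℝ) / (max (R ω) 1 : ℕ) ∂μ =
      ∑ k ∈ N,
        ((∑ r ∈ Finset.Icc 1 K,
            (∫ ω, (if P k ω ≤ α * R ω / K then (1 : ℝ) else 0) *
                (if R ω ≤ r then (1 : ℝ) else 0) ∂μ) / ((r : ℝ) * (r + 1))) +
          (∫ ω, (if P k ω ≤ α * R ω / K then (1 : ℝ) else 0) ∂μ) / ((K : ℝ) + 1)) :=
  fdp_decomposition_general μ P hP N R hR hRK
end

section
/- For a p-variable P_k (k null) and the BH rejection count R_𝒟, for each r ∈ {1,…,K}: E[1{P_k ≤ αR_𝒟/K}·1{R_𝒟 ≤ r}] ≤ α·r/K; combined with the FDP decomposition this yields FDR ≤ (αK₀/K)·Σ_{r=1}^K 1/r. -/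
open MeasureTheory ProbabilityTheory Finset
open scoped ENNReal Classical

/-!
On `{R ≤ r}` the event `{P_k ≤ αR/K}` lies inside `{P_k ≤ αr/K}`, which has probability at most
`αr/K`. For the FDR, Abel summation with the nonnegative telescoping weights
`a_r = 1/r - 1/(r+1)` (`r < K`), `a_K = 1/K` gives `1/max(R,1) = ∑_r a_r 1{R ≤ r}`, so the FDP is
bounded pointwise by `∑_{k ∈ N} ∑_r a_r 1{P_k ≤ αr/K}`, whose expectation is at most
`(α K₀/K) ∑_r r a_r = (α K₀/K) ℓ_K`.
-/

noncomputable def byWeight (K r : ℕ) : ℝ := if r < K then 1 / r - 1 / (r + 1) else 1 / K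

lemma byWeight_nonneg {K r : ℕ} (hr : 1 ≤ r) : 0 ≤ byWeight K r := by
  unfold byWeight
  split_ifs
  · have hr₀ : (0 : ℝ) < r := by exact_mod_cast hr
    have : (1 : ℝ) / (r + 1) ≤ 1 / r := one_div_le_one_div_of_le hr₀ (by linarith)
    linarith
  · positivity

lemma sum_Icc_byWeight {K m : ℕ} (hm : m ≤ K) : ∑ r ∈ Icc m K, byWeight K r = 1 / m := by
  have htelescope : ∑ r ∈ Ico m K, byWeight K r = 1 / m - 1 / K := by
    rw [sum_congr rfl fun r hr => by rw [byWeight, if_pos (mem_Ico.mp hr).2]]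
    convert sum_Ico_sub (fun r : ℕ => -(1 / (r : ℝ))) hm using 1
    · exact sum_congr rfl fun r _ => by push_cast; ring
    · ring
  rw [← Ico_add_one_right_eq_Icc, sum_Ico_succ_top hm, htelescope, byWeight, if_neg (lt_irrefl K)]
  ring

lemma sum_Icc_natCast_mul_byWeight (K : ℕ) :
    ∑ r ∈ Icc 1 K, (r : ℝ) * byWeight K r = harm K := by
  have hcount : ∀ r ∈ Icc 1 K, (r : ℝ) * byWeight K r = ∑ _m ∈ Icc 1 r, byWeight K r := by
    intro r _
    simp
  rw [sum_congr rfl hcount,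
    sum_comm' (t' := Icc 1 K) (s' := fun m => Icc m K) (by intro r m; simp only [mem_Icc]; omega)]
  exact sum_congr rfl fun m hm => sum_Icc_byWeight (mem_Icc.mp hm).2

lemma one_div_max_one_eq_sum_byWeight {K R : ℕ} (hK : 0 < K) (hR : R ≤ K) :
    (1 : ℝ) / (max R 1 : ℕ) = ∑ r ∈ Icc 1 K, byWeight K r * if R ≤ r then 1 else 0 := by
  have hfilter : (Icc 1 K).filter (R ≤ ·) = Icc (max R 1) K := by
    ext r; simp only [mem_filter, mem_Icc]; omega
  simp_rw [mul_ite, mul_one, mul_zero]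
  rw [← sum_filter, hfilter, sum_Icc_byWeight (max_le hR hK)]

lemma ite_le_mul_ite_le_le {x α : ℝ} (hα : 0 ≤ α) {K R r : ℕ} :
    ((if x ≤ α * R / K then 1 else 0) * (if R ≤ r then 1 else 0) : ℝ) ≤
      if x ≤ α * r / K then 1 else 0 := by
  by_cases hR : R ≤ r
  · have hthreshold : α * R / K ≤ α * r / K := by gcongr
    split_ifs <;> norm_num
    linarith
  · simp only [hR, if_false, mul_zero]
    split_ifs <;> norm_num

lemma card_filter_div_max_one_le {ι : Type*} (N : Finset ι) (p : ι → ℝ) {α : ℝ} (hα : 0 ≤ α)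
    {K R : ℕ} (hK : 0 < K) (hR : R ≤ K) :
    ((N.filter fun k => p k ≤ α * R / K).card : ℝ) / (max R 1 : ℕ) ≤
      ∑ k ∈ N, ∑ r ∈ Icc 1 K, byWeight K r * if p k ≤ α * r / K then 1 else 0 := by
  rw [natCast_card_filter, sum_div]
  refine sum_le_sum fun k _ => ?_
  rw [div_eq_mul_one_div, one_div_max_one_eq_sum_byWeight hK hR, mul_sum]
  refine sum_le_sum fun r hr => ?_
  rw [mul_left_comm]
  exact mul_le_mul_of_nonneg_left (ite_le_mul_ite_le_le hα)
    (byWeight_nonneg (mem_Icc.mp hr).1)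

lemma mul_natCast_div_mem_Ioo {α : ℝ} (hα : α ∈ Set.Ioo (0 : ℝ) 1) {K r : ℕ}
    (hr : r ∈ Icc 1 K) : α * r / K ∈ Set.Ioo (0 : ℝ) 1 := by
  obtain ⟨hα₀, hα₁⟩ := hα
  obtain ⟨hr₁, hrK⟩ := mem_Icc.mp hr
  have hr₀ : (0 : ℝ) < r := by exact_mod_cast hr₁
  have hrK' : (r : ℝ) ≤ K := by exact_mod_cast hrK
  have hK₀ : (0 : ℝ) < K := hr₀.trans_le hrK'
  exact ⟨by positivity, (div_lt_one hK₀).mpr (by nlinarith)⟩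

def IsPVariable {Ω : Type*} [MeasurableSpace Ω] (μ : Measure Ω) (p : Ω → ℝ) : Prop :=
  ∀ x ∈ Set.Ioo (0 : ℝ) 1, μ {ω | p ω ≤ x} ≤ ENNReal.ofReal x

lemma ite_le_eq_indicator {Ω : Type*} (p : Ω → ℝ) (x : ℝ) :
    (fun ω => if p ω ≤ x then (1 : ℝ) else 0) = {ω | p ω ≤ x}.indicator 1 := by
  ext ω
  simp [Set.indicator_apply]

section PVariable

variable {Ω : Type*} [MeasurableSpace Ω] {μ : Measure Ω} {p : Ω → ℝ}

lemma integrable_ite_le [IsFiniteMeasure μ] (hp : Measurable p) (x : ℝ) :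
    Integrable (fun ω => if p ω ≤ x then (1 : ℝ) else 0) μ := by
  rw [ite_le_eq_indicator]
  exact (integrable_const 1).indicator (measurableSet_le hp measurable_const)

lemma IsPVariable.integral_ite_le_le (hpv : IsPVariable μ p) (hp : Measurable p) {x : ℝ}
    (hx : x ∈ Set.Ioo (0 : ℝ) 1) : ∫ ω, (if p ω ≤ x then (1 : ℝ) else 0) ∂μ ≤ x := by
  rw [ite_le_eq_indicator, integral_indicator_one (measurableSet_le hp measurable_const)]
  exact ENNReal.toReal_le_of_le_ofReal hx.1.le (hpv x hx)

lemma IsPVariable.integral_ite_mul_ite_le [IsFiniteMeasure μ] (hpv : IsPVariable μ p)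
    (hp : Measurable p) (R : Ω → ℕ) {α : ℝ} (hα : α ∈ Set.Ioo (0 : ℝ) 1) {K r : ℕ}
    (hr : r ∈ Icc 1 K) :
    ∫ ω, (if p ω ≤ α * R ω / K then (1 : ℝ) else 0) * (if R ω ≤ r then (1 : ℝ) else 0) ∂μ ≤
      α * r / K :=
  calc _ ≤ ∫ ω, (if p ω ≤ α * r / K then (1 : ℝ) else 0) ∂μ :=
        integral_mono_of_nonneg (.of_forall fun ω => by positivity) (integrable_ite_le hp _)
          (.of_forall fun ω => ite_le_mul_ite_le_le hα.1.le)
    _ ≤ α * r / K := hpv.integral_ite_le_le hp (mul_natCast_div_mem_Ioo hα hr)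

lemma integral_card_filter_div_max_one_le [IsFiniteMeasure μ] {ι : Type*} (N : Finset ι)
    (P : ι → Ω → ℝ) (hP : ∀ k ∈ N, Measurable (P k)) (hpv : ∀ k ∈ N, IsPVariable μ (P k))
    (R : Ω → ℕ) {K : ℕ} (hK : 0 < K) (hR : ∀ ω, R ω ≤ K) {α : ℝ} (hα : α ∈ Set.Ioo (0 : ℝ) 1) :
    ∫ ω, ((N.filter fun k => P k ω ≤ α * R ω / K).card : ℝ) / (max (R ω) 1 : ℕ) ∂μ ≤
      α * N.card / K * harm K := by
  have hintegrable : ∀ k ∈ N, ∀ r ∈ Icc 1 K, Integrable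
      (fun ω => byWeight K r * if P k ω ≤ α * r / K then (1 : ℝ) else 0) μ :=
    fun k hk r _ => (integrable_ite_le (hP k hk) _).const_mul _
  calc _ ≤ ∫ ω, ∑ k ∈ N, ∑ r ∈ Icc 1 K,
          byWeight K r * (if P k ω ≤ α * r / K then (1 : ℝ) else 0) ∂μ :=
        integral_mono_of_nonneg (.of_forall fun ω => by positivity)
          (integrable_finsetSum _ fun k hk => integrable_finsetSum _ (hintegrable k hk))
          (.of_forall fun ω => card_filter_div_max_one_le N _ hα.1.le hK (hR ω))
    _ = ∑ k ∈ N, ∑ r ∈ Icc 1 K,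
          byWeight K r * ∫ ω, (if P k ω ≤ α * r / K then (1 : ℝ) else 0) ∂μ := by
        rw [integral_finsetSum _ fun k hk => integrable_finsetSum _ (hintegrable k hk)]
        refine sum_congr rfl fun k hk => ?_
        rw [integral_finsetSum _ (hintegrable k hk)]
        simp only [integral_const_mul]
    _ ≤ ∑ k ∈ N, ∑ r ∈ Icc 1 K, byWeight K r * (α * r / K) :=
        sum_le_sum fun k hk => sum_le_sum fun r hr =>
          mul_le_mul_of_nonneg_left ((hpv k hk).integral_ite_le_le (hP k hk)
            (mul_natCast_div_mem_Ioo hα hr)) (byWeight_nonneg (mem_Icc.mp hr).1)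
    _ = α * N.card / K * harm K := by
        rw [sum_const, nsmul_eq_mul, ← sum_Icc_natCast_mul_byWeight, mul_sum, mul_sum]
        exact sum_congr rfl fun r _ => by ring

end PVariable

/-- For a null p-variable `P_k` and the BH rejection count `R`, for each `r ∈ {1,…,K}`,
`E[1_{P_k ≤ αR/K} 1_{R ≤ r}] ≤ α r / K`; combined with the FDP decomposition this yields
`FDR ≤ (α K₀ / K) ∑_{r=1}^K 1/r`. -/
theorem by_term_bound_and_fdr
    {Ω : Type*} [MeasurableSpace Ω] (μ : Measure Ω) [IsProbabilityMeasure μ]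
    {K : ℕ} (hK : 0 < K) {α : ℝ} (hα : α ∈ Set.Ioo (0 : ℝ) 1)
    (P : Fin K → Ω → ℝ) (hP : ∀ k, Measurable (P k)) (N : Finset (Fin K))
    (h_pvar : ∀ k ∈ N, ∀ x ∈ Set.Ioo (0 : ℝ) 1, μ {ω | P k ω ≤ x} ≤ ENNReal.ofReal x) :
    (∀ k ∈ N, ∀ r ∈ Finset.Icc 1 K,
      ∫ ω, (if P k ω ≤ α * (bhRejects K α (fun j => P j ω)).card / K then (1 : ℝ) else 0) *
          (if (bhRejects K α (fun j => P j ω)).card ≤ r then (1 : ℝ) else 0) ∂μ ≤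
        α * r / K) ∧
    ∫ ω, ((N.filter (fun k =>
          P k ω ≤ α * (bhRejects K α (fun j => P j ω)).card / K)).card : ℝ) /
        (max (bhRejects K α (fun j => P j ω)).card 1 : ℕ) ∂μ ≤
      α * N.card / K * harm K := by
  set R : Ω → ℕ := fun ω => (bhRejects K α fun j => P j ω).card
  have hR : ∀ ω, R ω ≤ K := fun ω => by simpa using card_le_univ (bhRejects K α fun j => P j ω)
  exact ⟨fun k hk r hr => IsPVariable.integral_ite_mul_ite_le (h_pvar k hk) (hP k) R hα hr,
    integral_card_filter_div_max_one_le N P (fun k _ => hP k) h_pvar R hK hR hα⟩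
end
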